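/- arXiv:1310.8124 — 11 statements merged into one kernel-verified Lean document; each statement's English description precedes it below -/
import Mathlib

section
/- If X is a solution of the matrix equation X = A·Xᵀ·B + C, then X is also a solution of the Stein equation X = (A·Bᵀ)·X·(Aᵀ·B) + (C + A·Cᵀ·B). -/
open Matrix

theorem Matrix.eq_stein_of_eq_mul_transpose_mul_add {n R : Type*} [Fintype n] [CommSemiring R]
    {A B C X : Matrix n n R} (hX : X = A * Xᵀ * B + C) :
    X = A * Bᵀ * X * (Aᵀ * B) + (C + A * Cᵀ * B) := by
  have hXt : Xᵀ = Bᵀ * X * Aᵀ + Cᵀ := by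
    simpa only [transpose_add, transpose_mul, transpose_transpose, Matrix.mul_assoc]
      using congrArg transpose hX
  calc X = A * (Bᵀ * X * Aᵀ + Cᵀ) * B + C := by rw [← hXt]; exact hX
    _ = A * Bᵀ * X * (Aᵀ * B) + (C + A * Cᵀ * B) := by
      simp only [Matrix.mul_add, Matrix.add_mul, Matrix.mul_assoc]
      abel

theorem stmt_0 {m : ℕ} (A B C X : Matrix (Fin m) (Fin m) ℂ)
    (hX : X = A * X.transpose * B + C) :
    X = (A * B.transpose) * X * (A.transpose * B) + (C + A * C.transpose * B) :=
  eq_stein_of_eq_mul_transpose_mul_add hX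
end

section
/- If 𝒳 is a solution of the Stein equation 𝒳 = (A·Bᵀ)·𝒳·(Aᵀ·B) + (C + A·Cᵀ·B), then X := (1/2)(𝒳 + A·𝒳ᵀ·B + C) is a solution of the equation X = A·Xᵀ·B + C. -/
/-! Put `Y := 𝒳 + A 𝒳ᵀ B`. Transposing gives `A Yᵀ B = A 𝒳ᵀ B + (A Bᵀ) 𝒳 (Aᵀ B)`, so
`Y - A Yᵀ B = 𝒳 - (A Bᵀ) 𝒳 (Aᵀ B) = C + A Cᵀ B` by the Stein equation. Hence `Y + C` solves
`Z = A Zᵀ B + 2 C`, and halving gives the claim. -/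

open Matrix

theorem Matrix.add_mul_transpose_mul_add_eq_of_stein {n R : Type*} [Fintype n] [CommRing R]
    {A B C 𝒳 : Matrix n n R}
    (h𝒳 : 𝒳 = (A * Bᵀ) * 𝒳 * (Aᵀ * B) + (C + A * Cᵀ * B)) :
    𝒳 + A * 𝒳ᵀ * B + C = A * (𝒳 + A * 𝒳ᵀ * B + C)ᵀ * B + (2 : R) • C := by
  have hstein : A * (Bᵀ * (𝒳 * Aᵀ)) * B = 𝒳 - C - A * Cᵀ * B := by
    rw [sub_sub, eq_sub_iff_add_eq]
    conv_rhs => rw [h𝒳]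
    noncomm_ring
  simp only [transpose_add, transpose_mul, transpose_transpose, Matrix.mul_add, Matrix.add_mul,
    hstein]
  module

theorem stmt_1 {m : ℕ} (A B C 𝒳 : Matrix (Fin m) (Fin m) ℂ)
    (h𝒳 : 𝒳 = (A * B.transpose) * 𝒳 * (A.transpose * B) + (C + A * C.transpose * B)) :
    ((2 : ℂ)⁻¹ • (𝒳 + A * 𝒳.transpose * B + C)) =
      A * ((2 : ℂ)⁻¹ • (𝒳 + A * 𝒳.transpose * B + C)).transpose * B + C := by
  set Y := 𝒳 + A * 𝒳ᵀ * B + C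
  have hY : Y = A * Yᵀ * B + (2 : ℂ) • C := add_mul_transpose_mul_add_eq_of_stein h𝒳
  rw [transpose_smul, Matrix.mul_smul, Matrix.smul_mul]
  conv_lhs => rw [hY]
  rw [smul_add, smul_smul, inv_mul_cancel₀ two_ne_zero, one_smul]
end

section
/- If 𝒳 is a solution of the Stein equation 𝒳 = (A·Ā)·𝒳·(B̄·B) + (C + A·C̄·B), then X := (1/2)(𝒳 + A·𝒳̄·B + C) satisfies X = A·X̄·B + C. -/
namespace Matrix

section CommSemiring

variable {m n R : Type*} [CommSemiring R] [StarRing R]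

lemma map_starRingEnd_smul (r : R) (M : Matrix m n R) :
    (r • M).map (starRingEnd R) = starRingEnd R r • M.map (starRingEnd R) := by
  ext i j
  simp only [map_apply, smul_apply, smul_eq_mul, map_mul]

lemma map_starRingEnd_map_starRingEnd (M : Matrix m n R) :
    (M.map (starRingEnd R)).map (starRingEnd R) = M := by
  ext i j
  simp only [map_apply, starRingEnd_self_apply]

end CommSemiring

variable {m n R : Type*} [Fintype m] [Fintype n] [Field R] [StarRing R]

lemma conjStein_half_sum_of_stein (h2 : (2 : R) ≠ 0) {A : Matrix m m R} {B : Matrix n n R}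
    {C 𝒳 : Matrix m n R}
    (h𝒳 : 𝒳 = (A * A.map (starRingEnd R)) * 𝒳 * (B.map (starRingEnd R) * B)
        + (C + A * C.map (starRingEnd R) * B)) :
    (2 : R)⁻¹ • (𝒳 + A * 𝒳.map (starRingEnd R) * B + C) =
      A * ((2 : R)⁻¹ • (𝒳 + A * 𝒳.map (starRingEnd R) * B + C)).map (starRingEnd R) * B
        + C := by
  have hconj : A * (𝒳 + A * 𝒳.map (starRingEnd R) * B + C).map (starRingEnd R) * B
      = A * 𝒳.map (starRingEnd R) * B + 𝒳 - C := calc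
    _ = A * 𝒳.map (starRingEnd R) * B + ((A * A.map (starRingEnd R)) * 𝒳 *
          (B.map (starRingEnd R) * B) + (C + A * C.map (starRingEnd R) * B)) - C := by
      simp only [Matrix.map_add _ (map_add _), Matrix.map_mul, map_starRingEnd_map_starRingEnd,
        Matrix.mul_add, Matrix.add_mul, Matrix.mul_assoc]
      abel
    _ = A * 𝒳.map (starRingEnd R) * B + 𝒳 - C := by rw [← h𝒳]
  rw [map_starRingEnd_smul, map_inv₀, map_ofNat, Matrix.mul_smul, Matrix.smul_mul, hconj]
  linear_combination (norm := module) (inv_mul_cancel₀ h2) • C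

end Matrix

theorem stmt_3 {m : ℕ} (A B C 𝒳 : Matrix (Fin m) (Fin m) ℂ)
    (h𝒳 : 𝒳 = (A * A.map (starRingEnd ℂ)) * 𝒳 * (B.map (starRingEnd ℂ) * B)
        + (C + A * C.map (starRingEnd ℂ) * B)) :
    ((2 : ℂ)⁻¹ • (𝒳 + A * (𝒳.map (starRingEnd ℂ)) * B + C)) =
      A * ((2 : ℂ)⁻¹ • (𝒳 + A * (𝒳.map (starRingEnd ℂ)) * B + C)).map (starRingEnd ℂ) * B
        + C :=
  Matrix.conjStein_half_sum_of_stein two_ne_zero h𝒳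
end

section
/- Let f : 𝓜 → 𝓜 be a ℂ-linear map on m×m complex matrices satisfying f(XY) = f(X)f(Y) for all X, Y, and suppose fⁿ = id for a positive integer n. Define 𝒜 = A·f(A)·f²(A)⋯fⁿ⁻¹(A), ℬ = fⁿ⁻¹(B)·fⁿ⁻²(B)⋯f(B)·B, and Gᵢ(X) = (A·f(A)⋯fⁱ⁻¹(A))·fⁱ(X)·(fⁱ⁻¹(B)⋯f(B)·B). Then any solution X of X = A·f(X)·B + C satisfies the Stein equation X = 𝒜·X·ℬ + Σ_{i=0}^{n-1} Gᵢ(C). -/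
open Finset

/-- Ordered product `A · f(A) · f²(A) ⋯ f^{i-1}(A)`. -/
noncomputable def prodA {m : ℕ} (f : Matrix (Fin m) (Fin m) ℂ → Matrix (Fin m) (Fin m) ℂ)
    (A : Matrix (Fin m) (Fin m) ℂ) : ℕ → Matrix (Fin m) (Fin m) ℂ
  | 0 => 1
  | i + 1 => prodA f A i * f^[i] A

/-- Ordered product `f^{i-1}(B) ⋯ f(B) · B`. -/
noncomputable def prodB {m : ℕ} (f : Matrix (Fin m) (Fin m) ℂ → Matrix (Fin m) (Fin m) ℂ)
    (B : Matrix (Fin m) (Fin m) ℂ) : ℕ → Matrix (Fin m) (Fin m) ℂ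
  | 0 => 1
  | i + 1 => f^[i] B * prodB f B i

/-- `Gᵢ(X) = (A·f(A)⋯f^{i-1}(A)) · fⁱ(X) · (f^{i-1}(B)⋯f(B)·B)`. -/
noncomputable def G {m : ℕ} (f : Matrix (Fin m) (Fin m) ℂ → Matrix (Fin m) (Fin m) ℂ)
    (A B : Matrix (Fin m) (Fin m) ℂ) (i : ℕ) (X : Matrix (Fin m) (Fin m) ℂ) :
    Matrix (Fin m) (Fin m) ℂ :=
  prodA f A i * f^[i] X * prodB f B i

/-- The averaging operator `F(𝒳) = (1/n)·Σ_{i<n} (Gᵢ(𝒳) + (n−i−1)·Gᵢ(C))`. -/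
noncomputable def Fop {m : ℕ} (f : Matrix (Fin m) (Fin m) ℂ → Matrix (Fin m) (Fin m) ℂ)
    (A B C : Matrix (Fin m) (Fin m) ℂ) (n : ℕ) (𝒳 : Matrix (Fin m) (Fin m) ℂ) :
    Matrix (Fin m) (Fin m) ℂ :=
  ((n : ℂ)⁻¹) • ∑ i ∈ range n, (G f A B i 𝒳 + ((n - i - 1 : ℕ) : ℂ) • G f A B i C)

section Unrolling

variable {m : ℕ} {f : Matrix (Fin m) (Fin m) ℂ → Matrix (Fin m) (Fin m) ℂ}

lemma prodA_succ_mul_iterate_mul_prodB_succ_add_G (A B C Y : Matrix (Fin m) (Fin m) ℂ) (k : ℕ) :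
    prodA f A (k + 1) * Y * prodB f B (k + 1) + G f A B k C =
      prodA f A k * (f^[k] A * Y * f^[k] B + f^[k] C) * prodB f B k := by
  simp only [prodA, prodB, G]
  noncomm_ring

variable {A B C X : Matrix (Fin m) (Fin m) ℂ}

lemma iterate_eq_of_eq_mul_map_mul_add (hadd : ∀ X Y, f (X + Y) = f X + f Y)
    (hmul : ∀ X Y, f (X * Y) = f X * f Y) (hX : X = A * f X * B + C) (k : ℕ) :
    f^[k] X = f^[k] A * f^[k + 1] X * f^[k] B + f^[k] C := by
  conv_lhs => rw [hX]
  rw [Function.Semiconj₂.iterate hadd, Function.Semiconj₂.iterate hmul,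
    Function.Semiconj₂.iterate hmul, Function.iterate_succ_apply]

lemma eq_prodA_mul_iterate_mul_prodB_add_sum_G (hadd : ∀ X Y, f (X + Y) = f X + f Y)
    (hmul : ∀ X Y, f (X * Y) = f X * f Y) (hX : X = A * f X * B + C) (k : ℕ) :
    X = prodA f A k * f^[k] X * prodB f B k + ∑ i ∈ range k, G f A B i C := by
  induction k with
  | zero => simp [prodA, prodB]
  | succ k ih =>
    rw [sum_range_succ, ← add_assoc, add_right_comm,
      prodA_succ_mul_iterate_mul_prodB_succ_add_G,
      ← iterate_eq_of_eq_mul_map_mul_add hadd hmul hX k]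
    exact ih

end Unrolling

theorem stmt_4_general {m n : ℕ}
    (f : Matrix (Fin m) (Fin m) ℂ → Matrix (Fin m) (Fin m) ℂ)
    (hlin : IsLinearMap ℂ f) (hmul : ∀ X Y, f (X * Y) = f X * f Y)
    (hper : f^[n] = id)
    (A B C X : Matrix (Fin m) (Fin m) ℂ)
    (hX : X = A * f X * B + C) :
    X = prodA f A n * X * prodB f B n + ∑ i ∈ range n, G f A B i C := by
  simpa [hper] using eq_prodA_mul_iterate_mul_prodB_add_sum_G hlin.map_add hmul hX n

theorem stmt_4 {m n : ℕ} (hn : 0 < n)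
    (f : Matrix (Fin m) (Fin m) ℂ → Matrix (Fin m) (Fin m) ℂ)
    (hlin : IsLinearMap ℂ f) (hmul : ∀ X Y, f (X * Y) = f X * f Y)
    (hper : f^[n] = id)
    (A B C X : Matrix (Fin m) (Fin m) ℂ)
    (hX : X = A * f X * B + C) :
    X = prodA f A n * X * prodB f B n + ∑ i ∈ range n, G f A B i C :=
  stmt_4_general f hlin hmul hper A B C X hX
end

section
/- Let f be a multiplicative ℂ-linear map on m×m complex matrices with fⁿ = id, and define Gᵢ as the i-fold composition of the map X ↦ A·f(X)·B with C replaced by zero, i.e., Gᵢ(X) = (A·f(A)⋯fⁱ⁻¹(A))·fⁱ(X)·(fⁱ⁻¹(B)⋯f(B)·B). If 𝒳 satisfies the Stein equation 𝒳 = Gₙ(𝒳) + Σ_{i=0}^{n-1} Gᵢ(C), then F(𝒳) := (1/n)·Σ_{i=0}^{n-1} (Gᵢ(𝒳) + (n−i−1)·Gᵢ(C)) satisfies F(𝒳) = A·f(F(𝒳))·B + C. -/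
/-!
Put `T X = A · f(X) · B`. Since `f` is multiplicative with `f 1 = 1` (it is surjective, as
`fⁿ = id`), `Gᵢ = Tⁱ`, so everything happens in the ring `End(V)`. There
`(T - 1) · Σ_{i<n} Tⁱ = Tⁿ - 1` and `(T - 1) · Σ_{i<n} (n-i-1) Tⁱ = Σ_{i<n} Tⁱ - n`; applied to
`n·F(𝒳) = Σ Tⁱ 𝒳 + Σ (n-i-1) Tⁱ C` and combined with the Stein equation for `𝒳` they give
`(T - 1)(n·F(𝒳)) = -n·C`.
-/

open Finset

theorem Function.surjective_of_iterate_eq_id {α : Type*} {f : α → α} {n : ℕ} (hn : 0 < n)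
    (h : f^[n] = id) : Function.Surjective f := fun y =>
  ⟨f^[n - 1] y, by rw [← Function.iterate_succ_apply' f, Nat.succ_eq_add_one, Nat.sub_add_cancel hn, h, id]⟩

theorem map_one_of_surjective {M : Type*} [MulOneClass M] {f : M → M}
    (hmul : ∀ x y, f (x * y) = f x * f y) (hf : Function.Surjective f) : f 1 = 1 := by
  obtain ⟨y, hy⟩ := hf 1
  calc f 1 = f 1 * f y := by rw [hy, mul_one]
    _ = 1 := by rw [← hmul, one_mul, hy]

theorem mul_sum_range_natCast_sub_mul_pow {R : Type*} [Ring R] (x : R) (n : ℕ) :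
    (x - 1) * ∑ i ∈ range n, ((n - i - 1 : ℕ) : R) * x ^ i = ∑ i ∈ range n, x ^ i - n := by
  induction n with
  | zero => simp
  | succ n ih =>
    have hweights : ∑ i ∈ range (n + 1), ((n + 1 - i - 1 : ℕ) : R) * x ^ i
        = ∑ i ∈ range n, ((n - i - 1 : ℕ) : R) * x ^ i + ∑ i ∈ range n, x ^ i := by
      rw [sum_range_succ, show n + 1 - n - 1 = 0 by omega, Nat.cast_zero, zero_mul, add_zero,
        ← sum_add_distrib]
      refine sum_congr rfl fun i hi => ?_
      rw [show n + 1 - i - 1 = (n - i - 1) + 1 by grind, Nat.cast_succ, add_one_mul]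
    rw [hweights, mul_add, ih, mul_geom_sum, sum_range_succ, Nat.cast_succ]
    abel

section SteinEquation

variable {K V : Type*} [DivisionRing K] [CharZero K] [AddCommGroup V] [Module K V]

noncomputable def steinAverage (T : Module.End K V) (n : ℕ) (c x : V) : V :=
  (n : K)⁻¹ • ∑ i ∈ range n, ((T ^ i) x + ((n - i - 1 : ℕ) : K) • (T ^ i) c)

theorem steinAverage_eq_apply_add (T : Module.End K V) {n : ℕ} (hn : n ≠ 0) {c x : V}
    (hx : x = (T ^ n) x + ∑ i ∈ range n, (T ^ i) c) :
    steinAverage T n c x = T (steinAverage T n c x) + c := by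
  set S := ∑ i ∈ range n, T ^ i
  set W := ∑ i ∈ range n, ((n - i - 1 : ℕ) : Module.End K V) * T ^ i
  have hsum : ∑ i ∈ range n, ((T ^ i) x + ((n - i - 1 : ℕ) : K) • (T ^ i) c) = S x + W c := by
    simp [S, W, sum_add_distrib, LinearMap.sum_apply, Module.End.natCast_apply,
      Nat.cast_smul_eq_nsmul]
  have hSc : S c = ∑ i ∈ range n, (T ^ i) c := LinearMap.sum_apply _ _ _
  have hS : (T - 1) (S x) = -S c := by
    rw [← Module.End.mul_apply, mul_geom_sum, LinearMap.sub_apply, Module.End.one_apply, hSc,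
      eq_neg_iff_add_eq_zero, sub_add_eq_add_sub, ← hx, sub_self]
  have hW : (T - 1) (W c) = S c - (n : K) • c := by
    rw [← Module.End.mul_apply, mul_sum_range_natCast_sub_mul_pow]
    simp [Module.End.natCast_apply, Nat.cast_smul_eq_nsmul, hSc]
  have hTy : T (S x + W c) = S x + W c - (n : K) • c := by
    have h : (T - 1) (S x + W c) = -((n : K) • c) := by rw [map_add, hS, hW]; abel
    rw [LinearMap.sub_apply, Module.End.one_apply, sub_eq_iff_eq_add] at h
    rw [h]; abel
  rw [steinAverage, hsum, map_smul, hTy, smul_sub, smul_smul,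
    inv_mul_cancel₀ (Nat.cast_ne_zero.mpr hn), one_smul, sub_add_cancel]

end SteinEquation

section Matrix

variable {m : ℕ} {f : Matrix (Fin m) (Fin m) ℂ → Matrix (Fin m) (Fin m) ℂ}

noncomputable def steinMap (f : Matrix (Fin m) (Fin m) ℂ →ₗ[ℂ] Matrix (Fin m) (Fin m) ℂ)
    (A B : Matrix (Fin m) (Fin m) ℂ) : Module.End ℂ (Matrix (Fin m) (Fin m) ℂ) :=
  LinearMap.mulRight ℂ B ∘ₗ LinearMap.mulLeft ℂ A ∘ₗ f

@[simp]
theorem steinMap_apply (f : Matrix (Fin m) (Fin m) ℂ →ₗ[ℂ] Matrix (Fin m) (Fin m) ℂ)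
    (A B X : Matrix (Fin m) (Fin m) ℂ) : steinMap f A B X = A * f X * B :=
  rfl

variable (hmul : ∀ X Y, f (X * Y) = f X * f Y) (hone : f 1 = 1)
include hmul hone

theorem prodA_succ' (A : Matrix (Fin m) (Fin m) ℂ) (i : ℕ) :
    prodA f A (i + 1) = A * f (prodA f A i) := by
  induction i with
  | zero => simp [prodA, hone]
  | succ i ih =>
    calc prodA f A (i + 2) = A * f (prodA f A i) * f (f^[i] A) := by
          rw [← ih, ← Function.iterate_succ_apply' f]; rfl
      _ = A * f (prodA f A (i + 1)) := by rw [mul_assoc, ← hmul]; rfl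

theorem prodB_succ' (B : Matrix (Fin m) (Fin m) ℂ) (i : ℕ) :
    prodB f B (i + 1) = f (prodB f B i) * B := by
  induction i with
  | zero => simp [prodB, hone]
  | succ i ih =>
    calc prodB f B (i + 2) = f (f^[i] B) * (f (prodB f B i) * B) := by
          rw [← ih, ← Function.iterate_succ_apply' f]; rfl
      _ = f (prodB f B (i + 1)) * B := by rw [← mul_assoc, ← hmul]; rfl

theorem G_succ (A B : Matrix (Fin m) (Fin m) ℂ) (i : ℕ) (X : Matrix (Fin m) (Fin m) ℂ) :
    G f A B (i + 1) X = A * f (G f A B i X) * B := by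
  rw [G, G, prodA_succ' hmul hone, prodB_succ' hmul hone, hmul, hmul,
    Function.iterate_succ_apply']
  simp only [mul_assoc]

theorem G_eq_steinMap_pow_apply (hlin : IsLinearMap ℂ f) (A B : Matrix (Fin m) (Fin m) ℂ)
    (i : ℕ) (X : Matrix (Fin m) (Fin m) ℂ) :
    G f A B i X = (steinMap (hlin.mk' f) A B ^ i) X := by
  induction i with
  | zero => simp [G, prodA, prodB]
  | succ i ih => rw [G_succ hmul hone, ih, pow_succ', Module.End.mul_apply, steinMap_apply]; rfl

end Matrix

theorem stmt_5 {m n : ℕ} (hn : 0 < n)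
    (f : Matrix (Fin m) (Fin m) ℂ → Matrix (Fin m) (Fin m) ℂ)
    (hlin : IsLinearMap ℂ f) (hmul : ∀ X Y, f (X * Y) = f X * f Y)
    (hper : f^[n] = id)
    (A B C 𝒳 : Matrix (Fin m) (Fin m) ℂ)
    (h𝒳 : 𝒳 = G f A B n 𝒳 + ∑ i ∈ range n, G f A B i C) :
    Fop f A B C n 𝒳 = A * f (Fop f A B C n 𝒳) * B + C := by
  have hone := map_one_of_surjective hmul (Function.surjective_of_iterate_eq_id hn hper)
  have hG := G_eq_steinMap_pow_apply hmul hone hlin A B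
  have hF : Fop f A B C n 𝒳 = steinAverage (steinMap (hlin.mk' f) A B) n C 𝒳 := by
    simp only [Fop, steinAverage, hG]
  simp only [hG] at h𝒳
  rw [hF]
  exact steinAverage_eq_apply_add _ hn.ne' h𝒳
end

section
/- Let f be a multiplicative ℂ-linear map on m×m complex matrices with fⁿ = id, Gᵢ(X) = (A·f(A)⋯fⁱ⁻¹(A))·fⁱ(X)·(fⁱ⁻¹(B)⋯f(B)·B), and F(𝒳) = (1/n)·Σ_{i=0}^{n-1} (Gᵢ(𝒳) + (n−i−1)·Gᵢ(C)). If X solves X = A·f(X)·B + C, then F(X) = X. -/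
open Finset

/-! Applying `f^[i]` to the fixed-point equation `X = A f(X) B + C` and conjugating by the
partial products gives `Gᵢ(X) = Gᵢ₊₁(X) + Gᵢ(C)`, so `Gᵢ(X) = X - ∑_{j<i} Gⱼ(C)`. Summed over
`i < n`, each `Gⱼ(C)` is subtracted exactly `n - j - 1` times, which the weights in `F` restore. -/

theorem eq_add_sum_range_of_eq_add {M : Type*} [AddCommMonoid M] {g c : ℕ → M}
    (h : ∀ i, g i = g (i + 1) + c i) (n : ℕ) :
    g 0 = g n + ∑ i ∈ range n, c i := by
  induction n with
  | zero => simp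
  | succ n ih => rw [ih, h n, sum_range_succ]; abel

theorem sum_range_add_nsmul_eq_of_eq_add {M : Type*} [AddCommMonoid M] {g c : ℕ → M}
    (h : ∀ i, g i = g (i + 1) + c i) (n : ℕ) :
    ∑ i ∈ range n, (g i + (n - i - 1) • c i) = n • g 0 := by
  induction n with
  | zero => simp
  | succ n ih =>
    have hshift : ∀ i ∈ range n,
        g i + (n + 1 - i - 1) • c i = (g i + (n - i - 1) • c i) + c i := by
      intro i hi
      rw [add_assoc, ← succ_nsmul]
      congr 2
      have := mem_range.mp hi
      omega
    rw [sum_range_succ, sum_congr rfl hshift, sum_add_distrib, ih, eq_add_sum_range_of_eq_add h n]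
    rw [Nat.add_sub_cancel_left, Nat.sub_self, zero_smul, add_zero, succ_nsmul]
    abel

section FixedPoint

variable {m : ℕ} {f : Matrix (Fin m) (Fin m) ℂ → Matrix (Fin m) (Fin m) ℂ}
  {A B : Matrix (Fin m) (Fin m) ℂ}

theorem G_zero (X : Matrix (Fin m) (Fin m) ℂ) : G f A B 0 X = X := by
  simp [G, prodA, prodB]

theorem G_eq_G_succ_add (hadd : ∀ X Y, f (X + Y) = f X + f Y)
    (hmul : ∀ X Y, f (X * Y) = f X * f Y) {C X : Matrix (Fin m) (Fin m) ℂ}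
    (hX : X = A * f X * B + C) (i : ℕ) :
    G f A B i X = G f A B (i + 1) X + G f A B i C := by
  have hadd_iter : Function.Semiconj₂ f^[i] (· + ·) (· + ·) :=
    Function.Semiconj₂.iterate hadd i
  have hmul_iter : Function.Semiconj₂ f^[i] (· * ·) (· * ·) :=
    Function.Semiconj₂.iterate hmul i
  have hXi : f^[i] X = f^[i] A * f^[i + 1] X * f^[i] B + f^[i] C := by
    conv_lhs => rw [hX]
    rw [hadd_iter, hmul_iter, hmul_iter, Function.iterate_succ_apply]
  simp only [G, hXi, prodA, prodB]
  noncomm_ring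

end FixedPoint

theorem stmt_6_general {m n : ℕ} (hn : 0 < n)
    (f : Matrix (Fin m) (Fin m) ℂ → Matrix (Fin m) (Fin m) ℂ)
    (hlin : IsLinearMap ℂ f) (hmul : ∀ X Y, f (X * Y) = f X * f Y)
    (A B C X : Matrix (Fin m) (Fin m) ℂ)
    (hX : X = A * f X * B + C) :
    Fop f A B C n X = X := by
  have hsum := sum_range_add_nsmul_eq_of_eq_add (G_eq_G_succ_add hlin.map_add hmul hX) n
  simp only [G_zero] at hsum
  simp only [Fop, Nat.cast_smul_eq_nsmul, hsum]
  rw [← Nat.cast_smul_eq_nsmul ℂ, smul_smul, inv_mul_cancel₀ (by exact_mod_cast hn.ne'),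
    one_smul]

theorem stmt_6 {m n : ℕ} (hn : 0 < n)
    (f : Matrix (Fin m) (Fin m) ℂ → Matrix (Fin m) (Fin m) ℂ)
    (hlin : IsLinearMap ℂ f) (hmul : ∀ X Y, f (X * Y) = f X * f Y)
    (hper : f^[n] = id)
    (A B C X : Matrix (Fin m) (Fin m) ℂ)
    (hX : X = A * f X * B + C) :
    Fop f A B C n X = X :=
  stmt_6_general hn f hlin hmul A B C X hX
end

section
/- Let f be a multiplicative ℂ-linear map on m×m complex matrices with fⁿ = id, and let 𝒜 = A·f(A)⋯fⁿ⁻¹(A), ℬ = fⁿ⁻¹(B)⋯f(B)·B. If for all λ ∈ σ(𝒜) and μ ∈ σ(ℬ) one has λ·μ ≠ 1 (the spectra are reciprocal free), then the equation X = A·f(X)·B + C has exactly one solution. -/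
/-!
Put `T X = A * f X * B + C`. Since `f` is additive and multiplicative and `fⁿ = id`, the `n`-th
iterate is the Stein map `Tⁿ X = 𝒜 * X * ℬ + D` with `D = ∑ i < n, Gᵢ(C)`. Fixed points of `T` are
fixed points of `Tⁿ`, and as `T` commutes with `Tⁿ`, a unique fixed point of `Tⁿ` is fixed by `T`;
so it suffices that the Stein equation `X = 𝒜 * X * ℬ + D` has a unique solution, i.e. that
`𝒜 * X * ℬ = X` forces `X = 0`. From `𝒜 * X * ℬ = X` one gets `𝒜^(N-k) * X = 𝒜^N * X * ℬ^k`, hence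
`q(𝒜) * X = 𝒜^N * X * χ(ℬ) = 0` for the characteristic polynomial `χ` of `ℬ` and its reversal `q`.
The roots of `q` are the inverses of the eigenvalues of `ℬ`, so by spectral mapping and the
reciprocal-free hypothesis `q(𝒜)` is invertible, and `X = 0`.
-/

open Finset

open Polynomial Function

section Reflect

variable {R A : Type*} [CommSemiring R] [Semiring A] [Algebra R A]

lemma pow_mul_mul_pow_eq_self {a x b : A} (h : a * x * b = x) (k : ℕ) :
    a ^ k * x * b ^ k = x := by
  induction k with
  | zero => simp
  | succ k ih =>
    calc a ^ (k + 1) * x * b ^ (k + 1) = a ^ k * (a * x * b) * b ^ k := by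
          rw [pow_succ a, pow_succ' b]; simp only [mul_assoc]
      _ = x := by rw [h, ih]

lemma aeval_reflect_mul_of_mul_mul_eq_self {a x b : A} (h : a * x * b = x) {N : ℕ} {p : R[X]}
    (hp : p.natDegree ≤ N) : aeval a (reflect N p) * x = a ^ N * x * aeval b p := by
  refine induction_with_natDegree_le
    (fun p => aeval a (reflect N p) * x = a ^ N * x * aeval b p) N (by simp) ?_ ?_ p hp
  · intro k r _ hkN
    simp only [reflect_C_mul_X_pow, revAt_le hkN, map_mul, aeval_C, map_pow, aeval_X]
    calc algebraMap R A r * a ^ (N - k) * x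
        = algebraMap R A r * (a ^ (N - k) * (a ^ k * x * b ^ k)) := by
          rw [pow_mul_mul_pow_eq_self h, mul_assoc]
      _ = a ^ (N - k + k) * x * (b ^ k * algebraMap R A r) := by
          rw [Algebra.commutes, pow_add]; simp only [mul_assoc]
      _ = a ^ N * x * (algebraMap R A r * b ^ k) := by
          rw [Nat.sub_add_cancel hkN, Algebra.commutes]
  · intro p q _ _ hp hq
    simp only [reflect_add, map_add, add_mul, mul_add, hp, hq]

end Reflect

lemma Polynomial.isRoot_reverse_iff {K : Type*} [Field K] {p : K[X]} (hp : p ≠ 0) {z : K} :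
    p.reverse.IsRoot z ↔ z ≠ 0 ∧ p.IsRoot z⁻¹ := by
  rcases eq_or_ne z 0 with rfl | hz
  · simp [IsRoot, ← coeff_zero_eq_eval_zero, coeff_zero_reverse, hp]
  · let := invertibleOfNonzero (inv_ne_zero hz)
    have := eval₂_reverse_eq_zero_iff (RingHom.id K) z⁻¹ p
    simp_all [IsRoot]

section SteinEquation

variable {𝕜 ι : Type*} [Field 𝕜] [IsAlgClosed 𝕜] [Fintype ι] [DecidableEq ι]

lemma Matrix.eq_zero_of_mul_mul_eq_self {a b x : Matrix ι ι 𝕜}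
    (hab : ∀ s ∈ spectrum 𝕜 a, ∀ t ∈ spectrum 𝕜 b, s * t ≠ 1) (h : a * x * b = x) : x = 0 := by
  cases isEmpty_or_nonempty ι
  · exact Subsingleton.elim _ _
  have hqx : aeval a b.charpoly.reverse * x = 0 := by
    rw [reverse, aeval_reflect_mul_of_mul_mul_eq_self h le_rfl, aeval_self_charpoly, mul_zero]
  have hq : IsUnit (aeval a b.charpoly.reverse) := by
    rw [← spectrum.zero_notMem_iff 𝕜, spectrum.map_polynomial_aeval_of_nonempty a _
      (spectrum.nonempty_of_isAlgClosed_of_finiteDimensional 𝕜 a)]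
    rintro ⟨s, hs, hqs⟩
    obtain ⟨hs0, hroot⟩ := (isRoot_reverse_iff b.charpoly_monic.ne_zero).mp hqs
    exact hab s hs s⁻¹ (mem_spectrum_iff_isRoot_charpoly.mpr hroot) (mul_inv_cancel₀ hs0)
  exact hq.mul_right_eq_zero.mp hqx

lemma Matrix.existsUnique_mul_mul_add_eq {a b : Matrix ι ι 𝕜}
    (hab : ∀ s ∈ spectrum 𝕜 a, ∀ t ∈ spectrum 𝕜 b, s * t ≠ 1) (d : Matrix ι ι 𝕜) :
    ∃! x, x = a * x * b + d := by
  set ψ := LinearMap.id - LinearMap.mulLeftRight 𝕜 (a, b)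
  have hψ : ∀ x, ψ x = x - a * x * b := fun x => rfl
  have hinj : Injective ψ := by
    refine (injective_iff_map_eq_zero ψ).mpr fun x hx => eq_zero_of_mul_mul_eq_self hab ?_
    rwa [hψ, sub_eq_zero, eq_comm] at hx
  have hbij : Bijective ψ := ⟨hinj, LinearMap.injective_iff_surjective.mp hinj⟩
  simpa only [hψ, sub_eq_iff_eq_add'] using hbij.existsUnique d

end SteinEquation

lemma Function.existsUnique_isFixedPt_of_iterate {α : Type*} {g : α → α} {n : ℕ}
    (h : ∃! x, IsFixedPt g^[n] x) : ∃! x, IsFixedPt g x := by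
  obtain ⟨x, hx, hunique⟩ := h
  exact ⟨x, hunique _ (hx.map (Commute.self_iterate g n)), fun y hy => hunique y (hy.iterate n)⟩

section TwistedStein

variable {m : ℕ} {f : Matrix (Fin m) (Fin m) ℂ → Matrix (Fin m) (Fin m) ℂ}

lemma iterate_twistedStein_apply (hadd : ∀ X Y, f (X + Y) = f X + f Y)
    (hmul : ∀ X Y, f (X * Y) = f X * f Y) (A B C X : Matrix (Fin m) (Fin m) ℂ) (k : ℕ) :
    (fun Y => A * f Y * B + C)^[k] X =
      prodA f A k * f^[k] X * prodB f B k + ∑ i ∈ range k, G f A B i C := by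
  induction k generalizing X with
  | zero => simp [prodA, prodB]
  | succ k ih =>
    have hadd' : ∀ X Y, f^[k] (X + Y) = f^[k] X + f^[k] Y := Semiconj₂.iterate hadd k
    have hmul' : ∀ X Y, f^[k] (X * Y) = f^[k] X * f^[k] Y := Semiconj₂.iterate hmul k
    rw [iterate_succ_apply, ih, hadd', hmul', hmul', ← iterate_succ_apply, sum_range_succ,
      prodA, prodB, G]
    noncomm_ring

end TwistedStein

theorem stmt_10_general {m n : ℕ}
    (f : Matrix (Fin m) (Fin m) ℂ → Matrix (Fin m) (Fin m) ℂ)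
    (hlin : IsLinearMap ℂ f) (hmul : ∀ X Y, f (X * Y) = f X * f Y)
    (hper : f^[n] = id)
    (A B C : Matrix (Fin m) (Fin m) ℂ)
    (hrf : ∀ lam ∈ spectrum ℂ (prodA f A n), ∀ mu ∈ spectrum ℂ (prodB f B n),
      lam * mu ≠ 1) :
    ∃! X : Matrix (Fin m) (Fin m) ℂ, X = A * f X * B + C := by
  have hTn : (fun X => A * f X * B + C)^[n] =
      fun X => prodA f A n * X * prodB f B n + ∑ i ∈ range n, G f A B i C := by
    funext X
    rw [iterate_twistedStein_apply hlin.map_add hmul, hper, id]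
  have hstein : ∃! X, IsFixedPt (fun X => A * f X * B + C)^[n] X := by
    simpa only [hTn, IsFixedPt, eq_comm] using Matrix.existsUnique_mul_mul_add_eq hrf _
  simpa only [IsFixedPt, eq_comm] using existsUnique_isFixedPt_of_iterate hstein

theorem stmt_10 {m n : ℕ} (hn : 0 < n)
    (f : Matrix (Fin m) (Fin m) ℂ → Matrix (Fin m) (Fin m) ℂ)
    (hlin : IsLinearMap ℂ f) (hmul : ∀ X Y, f (X * Y) = f X * f Y)
    (hper : f^[n] = id)
    (A B C : Matrix (Fin m) (Fin m) ℂ)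
    (hrf : ∀ lam ∈ spectrum ℂ (prodA f A n), ∀ mu ∈ spectrum ℂ (prodB f B n),
      lam * mu ≠ 1) :
    ∃! X : Matrix (Fin m) (Fin m) ℂ, X = A * f X * B + C :=
  stmt_10_general f hlin hmul hper A B C hrf
end

section
/- For m×m complex matrices 𝒜, ℬ, 𝒞, if λμ ≠ 1 for all λ ∈ σ(𝒜) and μ ∈ σ(ℬ), then the Stein equation 𝒳 = 𝒜·𝒳·ℬ + 𝒞 has a unique solution. -/
/-!
The Stein operator `X ↦ X - A X B` is a linear endomorphism of a finite-dimensional space, so it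
suffices to show that `Y = A Y B` forces `Y = 0`. Such a `Y` satisfies `Y = Aᵏ Y Bᵏ`, hence
`A^N Y p(B) = p̃(A) Y` for every polynomial `p` of degree at most `N`, where `p̃ = X^N p(1/X)` is
the reversal of `p`. Taking `p = χ_B`, Cayley–Hamilton kills the right-hand side, while the
roots of `χ̃_B` are the inverses of the nonzero eigenvalues of `B` and `χ̃_B(0) = 1`; so by the
spectral mapping theorem and `λμ ≠ 1`, `χ̃_B(A)` is invertible and `Y = 0`.
-/

open Polynomial

section EqMulMul

variable {R A : Type*} [CommSemiring R] [Semiring A] [Algebra R A] {a b y : A}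

theorem eq_pow_mul_mul_pow_of_eq_mul_mul (h : y = a * y * b) (k : ℕ) :
    y = a ^ k * y * b ^ k := by
  induction k with
  | zero => simp
  | succ k ih =>
    calc y = a ^ k * (a * y * b) * b ^ k := by rw [← h, ← ih]
      _ = a ^ (k + 1) * y * b ^ (k + 1) := by simp only [pow_succ, pow_succ' b, mul_assoc]

theorem pow_mul_mul_pow_eq_of_eq_mul_mul (h : y = a * y * b) {k N : ℕ} (hk : k ≤ N) :
    a ^ N * y * b ^ k = a ^ (N - k) * y :=
  calc a ^ N * y * b ^ k = a ^ (N - k) * (a ^ k * y * b ^ k) := by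
        rw [← Nat.sub_add_cancel hk, pow_add, Nat.add_sub_cancel]; simp only [mul_assoc]
    _ = a ^ (N - k) * y := by rw [← eq_pow_mul_mul_pow_of_eq_mul_mul h k]

theorem aeval_reflect_mul_eq_pow_mul_mul_aeval (h : y = a * y * b) {N : ℕ} {p : R[X]}
    (hp : p.natDegree ≤ N) : aeval a (reflect N p) * y = a ^ N * y * aeval b p := by
  refine induction_with_natDegree_le (fun p => aeval a (reflect N p) * y = a ^ N * y * aeval b p)
    N (by simp) (fun n r _ hn => ?_) (fun f g _ _ hf hg => ?_) p hp
  · simp only [reflect_C_mul_X_pow, revAt_le hn, map_mul, aeval_C, aeval_X_pow,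
      ← Algebra.smul_def, smul_mul_assoc, mul_smul_comm, pow_mul_mul_pow_eq_of_eq_mul_mul h hn]
  · simp only [reflect_add, map_add, add_mul, mul_add, hf, hg]

end EqMulMul

theorem Polynomial.eval_zero_reflect_natDegree {R : Type*} [Semiring R] (p : R[X]) :
    (reflect p.natDegree p).eval 0 = p.leadingCoeff := by
  rw [← coeff_zero_eq_eval_zero, coeff_reflect, revAt_zero, leadingCoeff]

theorem Polynomial.eval_reflect_eq_zero_iff {K : Type*} [Field K] {k : K} (hk : k ≠ 0) {N : ℕ}
    {p : K[X]} (hp : p.natDegree ≤ N) : (reflect N p).eval k = 0 ↔ p.eval k⁻¹ = 0 := by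
  let := invertibleOfNonzero (inv_ne_zero hk)
  simpa only [invOf_eq_inv, inv_inv, eval₂_id] using
    eval₂_reflect_eq_zero_iff (RingHom.id K) k⁻¹ N p hp

theorem isUnit_aeval_of_forall_eval_ne_zero {K A : Type*} [Field K] [IsAlgClosed K] [Ring A]
    [Algebra K A] [FiniteDimensional K A] {a : A} {p : K[X]}
    (h : ∀ k ∈ spectrum K a, p.eval k ≠ 0) : IsUnit (aeval a p) := by
  nontriviality A
  by_contra hu
  rw [← spectrum.zero_mem_iff K, spectrum.map_polynomial_aeval_of_nonempty a p
    (spectrum.nonempty_of_isAlgClosed_of_finiteDimensional K a)] at hu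
  obtain ⟨k, hk, hk0⟩ := hu
  exact h k hk hk0

namespace Matrix

def steinOperator {n R : Type*} [Fintype n] [CommRing R] (A B : Matrix n n R) :
    Matrix n n R →ₗ[R] Matrix n n R :=
  LinearMap.id - LinearMap.mulLeft R A ∘ₗ LinearMap.mulRight R B

theorem steinOperator_apply {n R : Type*} [Fintype n] [CommRing R] (A B X : Matrix n n R) :
    steinOperator A B X = X - A * X * B := by
  simp [steinOperator, mul_assoc]

variable {n K : Type*} [Fintype n] [DecidableEq n] [Field K] [IsAlgClosed K]
  {A B : Matrix n n K}

theorem isUnit_aeval_reflect_charpoly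
    (h : ∀ lam ∈ spectrum K A, ∀ mu ∈ spectrum K B, lam * mu ≠ 1) :
    IsUnit (aeval A (reflect B.charpoly.natDegree B.charpoly)) := by
  refine isUnit_aeval_of_forall_eval_ne_zero fun k hk => ?_
  rcases eq_or_ne k 0 with rfl | hk0
  · rw [eval_zero_reflect_natDegree, B.charpoly_monic.leadingCoeff]
    exact one_ne_zero
  · rw [Ne, eval_reflect_eq_zero_iff hk0 le_rfl, ← IsRoot.def,
      ← mem_spectrum_iff_isRoot_charpoly]
    exact fun hkB => h k hk k⁻¹ hkB (mul_inv_cancel₀ hk0)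

theorem eq_zero_of_eq_mul_mul
    (h : ∀ lam ∈ spectrum K A, ∀ mu ∈ spectrum K B, lam * mu ≠ 1)
    {Y : Matrix n n K} (hY : Y = A * Y * B) : Y = 0 := by
  have hkill : aeval A (reflect B.charpoly.natDegree B.charpoly) * Y = 0 := by
    rw [aeval_reflect_mul_eq_pow_mul_mul_aeval hY le_rfl, aeval_self_charpoly, mul_zero]
  exact (isUnit_aeval_reflect_charpoly h).mul_right_eq_zero.mp hkill

theorem steinOperator_bijective
    (h : ∀ lam ∈ spectrum K A, ∀ mu ∈ spectrum K B, lam * mu ≠ 1) :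
    Function.Bijective (steinOperator A B) := by
  have hinj : Function.Injective (steinOperator A B) := by
    refine (injective_iff_map_eq_zero _).mpr fun Y hY => eq_zero_of_eq_mul_mul h ?_
    rwa [steinOperator_apply, sub_eq_zero] at hY
  exact ⟨hinj, LinearMap.injective_iff_surjective.mp hinj⟩

end Matrix

theorem stmt_11 {m : ℕ} (𝒜 ℬ 𝒞 : Matrix (Fin m) (Fin m) ℂ)
    (hrf : ∀ lam ∈ spectrum ℂ 𝒜, ∀ mu ∈ spectrum ℂ ℬ, lam * mu ≠ 1) :
    ∃! 𝒳 : Matrix (Fin m) (Fin m) ℂ, 𝒳 = 𝒜 * 𝒳 * ℬ + 𝒞 := by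
  simpa only [Matrix.steinOperator_apply, sub_eq_iff_eq_add'] using
    (Matrix.steinOperator_bijective hrf).existsUnique 𝒞
end

section
/- For m×m complex matrices 𝒜, ℬ, 𝒞 with ρ(𝒜)·ρ(ℬ) < 1 (product of spectral radii less than 1), the Stein equation 𝒳 = 𝒜·𝒳·ℬ + 𝒞 has a unique solution, given by 𝒳 = Σ_{j=0}^{∞} 𝒜ʲ·𝒞·ℬʲ, and this series converges. -/
/-- Spectral radius of a complex matrix: supremum of the absolute values of its
eigenvalues. -/
noncomputable def specRad {m : ℕ} (A : Matrix (Fin m) (Fin m) ℂ) : ℝ :=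
  sSup ((fun z : ℂ => ‖z‖) '' spectrum ℂ A)

/-!
Telescoping `a ^ j * x * b ^ j` along a solution of `x = a * x * b + c` shows that the partial
sums of `∑ a ^ j * c * b ^ j` are `x - a ^ n * x * b ^ n`. By Gelfand's formula,
`‖a ^ n‖ * ‖b ^ n‖ ≤ q ^ n` eventually for any `q` between `ρ(a) ρ(b)` and `1`, so the series
converges absolutely and `a ^ n * x * b ^ n → 0`: every solution is the sum of the series, and
the sum is a solution by shifting the index.
-/

open Filter Topology
open scoped NNReal ENNReal

section SteinSeries

variable {R : Type*} [Ring R] {a b c x : R}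

theorem sum_range_pow_mul_mul_pow_of_eq (hx : x = a * x * b + c) (n : ℕ) :
    ∑ j ∈ Finset.range n, a ^ j * c * b ^ j = x - a ^ n * x * b ^ n := by
  have hstep : ∀ j, a ^ j * c * b ^ j = a ^ j * x * b ^ j - a ^ (j + 1) * x * b ^ (j + 1) := by
    intro j
    rw [eq_sub_iff_add_eq']
    calc a ^ (j + 1) * x * b ^ (j + 1) + a ^ j * c * b ^ j = a ^ j * (a * x * b + c) * b ^ j := by
          simp only [pow_succ a j, pow_succ' b j, mul_add, add_mul, mul_assoc]
      _ = a ^ j * x * b ^ j := by rw [← hx]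
  simp only [hstep, Finset.sum_range_sub', pow_zero, one_mul, mul_one]

variable [TopologicalSpace R] [IsTopologicalRing R] [T2Space R]

theorem hasSum_pow_mul_mul_pow_of_eq (hs : Summable fun j => a ^ j * c * b ^ j)
    (hx : x = a * x * b + c) (hlim : Tendsto (fun n => a ^ n * x * b ^ n) atTop (𝓝 0)) :
    HasSum (fun j => a ^ j * c * b ^ j) x := by
  rw [hs.hasSum_iff_tendsto_nat]
  simp only [sum_range_pow_mul_mul_pow_of_eq hx]
  simpa using tendsto_const_nhds.sub hlim

theorem tsum_pow_mul_mul_pow_eq (hs : Summable fun j => a ^ j * c * b ^ j) :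
    ∑' j, a ^ j * c * b ^ j = a * (∑' j, a ^ j * c * b ^ j) * b + c := by
  have hshift : ∀ j, a ^ (j + 1) * c * b ^ (j + 1) = a * (a ^ j * c * b ^ j) * b := by
    intro j
    simp only [pow_succ' a j, pow_succ b j, mul_assoc]
  calc ∑' j, a ^ j * c * b ^ j = c + ∑' j, a * (a ^ j * c * b ^ j) * b := by
        simp only [hs.tsum_eq_zero_add, hshift, pow_zero, one_mul, mul_one]
    _ = a * (∑' j, a ^ j * c * b ^ j) * b + c := by
        rw [(hs.mul_left a).tsum_mul_right, hs.tsum_mul_left, add_comm]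

end SteinSeries

section BanachAlgebra

variable {A : Type*} [NormedRing A] [NormedAlgebra ℂ A] [CompleteSpace A]

theorem spectralRadius_lt_top (a : A) : spectralRadius ℂ a < ⊤ := by
  refine lt_of_le_of_lt (b := (‖a‖₊ : ℝ≥0∞)) ?_ ENNReal.coe_lt_top
  refine le_of_tendsto (spectrum.pow_nnnorm_pow_one_div_tendsto_nhds_spectralRadius a) ?_
  filter_upwards [eventually_gt_atTop 0] with n hn
  rw [one_div, ENNReal.rpow_inv_le_iff (by positivity), ENNReal.rpow_natCast]
  exact_mod_cast nnnorm_pow_le' a hn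

theorem eventually_nnnorm_pow_mul_nnnorm_pow_lt {a b : A} {q : ℝ≥0}
    (h : spectralRadius ℂ a * spectralRadius ℂ b < q) :
    ∀ᶠ n : ℕ in atTop, ‖a ^ n‖₊ * ‖b ^ n‖₊ < q ^ n := by
  have hlim := ENNReal.Tendsto.mul
    (spectrum.pow_nnnorm_pow_one_div_tendsto_nhds_spectralRadius a)
    (Or.inr (spectralRadius_lt_top b).ne)
    (spectrum.pow_nnnorm_pow_one_div_tendsto_nhds_spectralRadius b)
    (Or.inr (spectralRadius_lt_top a).ne)
  filter_upwards [hlim.eventually_lt_const h, eventually_gt_atTop 0] with n hn hn0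
  rw [← ENNReal.mul_rpow_of_nonneg _ _ (by positivity), one_div,
    ENNReal.rpow_inv_lt_iff (by positivity), ENNReal.rpow_natCast] at hn
  exact_mod_cast hn

theorem stein_equation_of_spectralRadius_mul_lt_one {a b : A} (c : A)
    (h : spectralRadius ℂ a * spectralRadius ℂ b < 1) :
    (∃! x : A, x = a * x * b + c) ∧
      ∀ x : A, x = a * x * b + c → HasSum (fun j : ℕ => a ^ j * c * b ^ j) x := by
  obtain ⟨q, hq, hq_lt_one⟩ := ENNReal.lt_iff_exists_nnreal_btwn.1 h
  have hq1 : (q : ℝ) < 1 := by exact_mod_cast hq_lt_one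
  have hbound : ∀ y : A, ∀ᶠ n : ℕ in atTop, ‖a ^ n * y * b ^ n‖ ≤ ‖y‖ * q ^ n := by
    intro y
    filter_upwards [eventually_nnnorm_pow_mul_nnnorm_pow_lt hq] with n hn
    have hn : ‖a ^ n‖ * ‖b ^ n‖ ≤ q ^ n := by exact_mod_cast hn.le
    calc ‖a ^ n * y * b ^ n‖ ≤ ‖a ^ n‖ * ‖y‖ * ‖b ^ n‖ := norm_mul₃_le
      _ = ‖y‖ * (‖a ^ n‖ * ‖b ^ n‖) := by ring
      _ ≤ ‖y‖ * q ^ n := by gcongr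
  have hs : Summable fun j => a ^ j * c * b ^ j :=
    .of_norm_bounded_eventually_nat ((summable_geometric_of_lt_one q.2 hq1).mul_left _)
      (hbound c)
  have hsol : ∀ x, x = a * x * b + c → HasSum (fun j => a ^ j * c * b ^ j) x := fun x hx =>
    hasSum_pow_mul_mul_pow_of_eq hs hx <| squeeze_zero_norm' (hbound x) <| by
      simpa using (tendsto_pow_atTop_nhds_zero_of_lt_one q.2 hq1).const_mul ‖x‖
  exact ⟨⟨_, tsum_pow_mul_mul_pow_eq hs, fun x hx => (hsol x hx).tsum_eq.symm⟩, hsol⟩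

end BanachAlgebra

attribute [local instance] Matrix.linftyOpNormedRing Matrix.linftyOpNormedAlgebra

theorem spectralRadius_le_ofReal_specRad {m : ℕ} (A : Matrix (Fin m) (Fin m) ℂ) :
    spectralRadius ℂ A ≤ ENNReal.ofReal (specRad A) := by
  refine iSup₂_le fun k hk => ?_
  have hbdd : BddAbove ((fun z : ℂ => ‖z‖) '' spectrum ℂ A) :=
    ((spectrum.isCompact A).image continuous_norm).bddAbove
  exact (ofReal_norm k).symm.trans_le <| ENNReal.ofReal_le_ofReal (le_csSup hbdd ⟨k, hk, rfl⟩)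

theorem specRad_nonneg {m : ℕ} (A : Matrix (Fin m) (Fin m) ℂ) : 0 ≤ specRad A :=
  Real.sSup_nonneg fun _ ⟨k, _, hk⟩ => hk ▸ norm_nonneg k

theorem stmt_12 {m : ℕ} (𝒜 ℬ 𝒞 : Matrix (Fin m) (Fin m) ℂ)
    (hρ : specRad 𝒜 * specRad ℬ < 1) :
    (∃! 𝒳 : Matrix (Fin m) (Fin m) ℂ, 𝒳 = 𝒜 * 𝒳 * ℬ + 𝒞) ∧
      ∀ 𝒳 : Matrix (Fin m) (Fin m) ℂ, 𝒳 = 𝒜 * 𝒳 * ℬ + 𝒞 →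
        HasSum (fun j : ℕ => 𝒜 ^ j * 𝒞 * ℬ ^ j) 𝒳 := by
  refine stein_equation_of_spectralRadius_mul_lt_one 𝒞 ?_
  calc spectralRadius ℂ 𝒜 * spectralRadius ℂ ℬ
      ≤ ENNReal.ofReal (specRad 𝒜) * ENNReal.ofReal (specRad ℬ) :=
        mul_le_mul' (spectralRadius_le_ofReal_specRad 𝒜) (spectralRadius_le_ofReal_specRad ℬ)
    _ = ENNReal.ofReal (specRad 𝒜 * specRad ℬ) := (ENNReal.ofReal_mul (specRad_nonneg 𝒜)).symm
    _ < 1 := ENNReal.ofReal_lt_one.2 hρ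
end

section
/- Let 𝒜, ℬ, 𝒞 be m×m complex matrices, X the solution of the Stein equation X = 𝒜·X·ℬ + 𝒞, and r ≥ 2 an integer. Then for every k ≥ 0, X = 𝒜^{r^k}·X·ℬ^{r^k} + Σ 𝒜^{i₁+r·i₂+⋯+r^{k-1}·i_k}·𝒞·ℬ^{i₁+r·i₂+⋯+r^{k-1}·i_k}, where the sum runs over all tuples (i₁,…,i_k) with 0 ≤ i_j ≤ r−1. -/
open Finset

theorem eq_pow_mul_mul_pow_add_sum_of_eq_mul_mul_add {R : Type*} [Ring R] {A B C X : R}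
    (hX : X = A * X * B + C) (n : ℕ) :
    X = A ^ n * X * B ^ n + ∑ i ∈ range n, A ^ i * C * B ^ i := by
  induction n with
  | zero => simp
  | succ n ih =>
    calc X = A ^ n * (A * X * B + C) * B ^ n + ∑ i ∈ range n, A ^ i * C * B ^ i := by
          rwa [← hX]
      _ = A ^ (n + 1) * X * B ^ (n + 1) + ∑ i ∈ range (n + 1), A ^ i * C * B ^ i := by
          rw [sum_range_succ, pow_succ A, pow_succ' B]
          noncomm_ring

theorem sum_digits_eq_sum_range {M : Type*} [AddCommMonoid M] (f : ℕ → M) (r k : ℕ) :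
    ∑ t : Fin k → Fin r, f (∑ j : Fin k, r ^ (j : ℕ) * (t j : ℕ)) =
      ∑ i ∈ range (r ^ k), f i := by
  rw [← Fin.sum_univ_eq_sum_range]
  refine Fintype.sum_equiv finFunctionFinEquiv _ _ fun t => ?_
  simp only [finFunctionFinEquiv_apply, mul_comm]

theorem stmt_14_general {m : ℕ} (𝒜 ℬ 𝒞 X : Matrix (Fin m) (Fin m) ℂ)
    (hX : X = 𝒜 * X * ℬ + 𝒞) (r : ℕ) (k : ℕ) :
    X = 𝒜 ^ (r ^ k) * X * ℬ ^ (r ^ k) +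
      ∑ t : Fin k → Fin r,
        𝒜 ^ (∑ j : Fin k, r ^ (j : ℕ) * (t j : ℕ)) * 𝒞 *
          ℬ ^ (∑ j : Fin k, r ^ (j : ℕ) * (t j : ℕ)) := by
  rw [sum_digits_eq_sum_range (fun i => 𝒜 ^ i * 𝒞 * ℬ ^ i)]
  exact eq_pow_mul_mul_pow_add_sum_of_eq_mul_mul_add hX (r ^ k)

theorem stmt_14 {m : ℕ} (𝒜 ℬ 𝒞 X : Matrix (Fin m) (Fin m) ℂ)
    (hX : X = 𝒜 * X * ℬ + 𝒞) (r : ℕ) (hr : 2 ≤ r) (k : ℕ) :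
    X = 𝒜 ^ (r ^ k) * X * ℬ ^ (r ^ k) +
      ∑ t : Fin k → Fin r,
        𝒜 ^ (∑ j : Fin k, r ^ (j : ℕ) * (t j : ℕ)) * 𝒞 *
          ℬ ^ (∑ j : Fin k, r ^ (j : ℕ) * (t j : ℕ)) :=
  stmt_14_general 𝒜 ℬ 𝒞 X hX r k
end

section
/- Let P be the m×m cyclic permutation matrix with Pᵐ = I. If 𝒳 satisfies the Stein equation 𝒳 = (A·Pᵀ)ᵐ·𝒳·(P·B)ᵐ + Σ_{i=0}^{m-1} (A·Pᵀ)ⁱ·C·(P·B)ⁱ, then X := (1/m)·Σ_{i=0}^{m-1} (A·Pᵀ)ⁱ·(𝒳 + (m−i−1)·C)·(P·B)ⁱ satisfies X = A·Pᵀ·X·P·B + C. -/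
open Finset

/-- The primary (cyclic) permutation matrix: `P i j = 1` iff `j = i + 1 (mod m)`. -/
noncomputable def Pmat (m : ℕ) [NeZero m] : Matrix (Fin m) (Fin m) ℂ :=
  Matrix.of fun i j => if j = i + 1 then 1 else 0

/-!
Write `φ Y = L Y R` with `L = A Pᵀ`, `R = P B`. Then `m X = T + W` with `T = ∑_{i<m} φⁱ 𝒳` and
`W = ∑_{i<m} (m - i - 1) φⁱ C`, and the hypothesis reads `𝒳 = φᵐ 𝒳 + F` with `F = ∑_{i<m} φⁱ C`.
Shifting indices, `φ T = T - 𝒳 + φᵐ 𝒳 = T - F`, and `φ W = W + F - m C`: after the shift `φʲ C`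
carries weight `m - j`, one more than in `W`, and only the term `m C` at `j = 0` is missing.
Hence `φ (m X) + m C = m X`.
-/

namespace AddMonoid.End

variable {M : Type*}

theorem map_sum_range_pow_add [AddCommMonoid M] (φ : AddMonoid.End M) (x : M) (n : ℕ) :
    φ (∑ i ∈ range n, (φ ^ i) x) + x = ∑ i ∈ range n, (φ ^ i) x + (φ ^ n) x := by
  rw [← sum_range_succ, sum_range_succ', map_sum]
  simp [pow_succ']

theorem map_sum_range_weighted_pow_add [AddCommMonoid M] (φ : AddMonoid.End M) (c : M) (n : ℕ) :
    φ (∑ i ∈ range n, (n - i - 1) • (φ ^ i) c) + n • c =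
      ∑ i ∈ range n, (n - i - 1) • (φ ^ i) c + ∑ i ∈ range n, (φ ^ i) c := by
  induction n with
  | zero => simp
  | succ n ih =>
    have weights : ∑ i ∈ range (n + 1), (n + 1 - i - 1) • (φ ^ i) c =
        ∑ i ∈ range n, (n - i - 1) • (φ ^ i) c + ∑ i ∈ range n, (φ ^ i) c := by
      rw [sum_range_succ, show n + 1 - n - 1 = 0 by omega, zero_smul, add_zero, ← sum_add_distrib]
      refine sum_congr rfl fun i hi => ?_
      rw [← succ_nsmul]
      congr 1
      have := mem_range.mp hi
      omega
    rw [weights, map_add, succ_nsmul, add_add_add_comm, ih, add_assoc, map_sum_range_pow_add,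
      sum_range_succ _ n, add_assoc]

theorem map_sum_range_pow_add_nsmul_eq [AddCancelCommMonoid M] (φ : AddMonoid.End M)
    (x c : M) (n : ℕ) (hx : x = (φ ^ n) x + ∑ i ∈ range n, (φ ^ i) c) :
    φ (∑ i ∈ range n, (φ ^ i) (x + (n - i - 1) • c)) + n • c =
      ∑ i ∈ range n, (φ ^ i) (x + (n - i - 1) • c) := by
  simp only [map_add, map_nsmul, sum_add_distrib]
  apply add_right_cancel (b := x)
  calc φ (∑ i ∈ range n, (φ ^ i) x) + φ (∑ i ∈ range n, (n - i - 1) • (φ ^ i) c) + n • c + x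
      = (φ (∑ i ∈ range n, (φ ^ i) x) + x) +
          (φ (∑ i ∈ range n, (n - i - 1) • (φ ^ i) c) + n • c) := by abel
    _ = ∑ i ∈ range n, (φ ^ i) x + ∑ i ∈ range n, (n - i - 1) • (φ ^ i) c +
          ((φ ^ n) x + ∑ i ∈ range n, (φ ^ i) c) := by
      rw [map_sum_range_pow_add, map_sum_range_weighted_pow_add]; abel
    _ = _ := by rw [← hx]

theorem mulLeft_mul_mulRight_apply [Semiring M] (L R Y : M) :
    (mulLeft L * mulRight R) Y = L * Y * R :=
  (mul_assoc L Y R).symm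

theorem mulLeft_mul_mulRight_pow_apply [Semiring M] (L R Y : M) (i : ℕ) :
    ((mulLeft L * mulRight R) ^ i) Y = L ^ i * Y * R ^ i := by
  induction i with
  | zero => simp
  | succ i ih =>
    rw [pow_succ', coe_mul, Function.comp_apply, ih, mulLeft_mul_mulRight_apply, pow_succ',
      pow_succ]
    simp only [mul_assoc]

end AddMonoid.End

open AddMonoid.End in
theorem stmt_16 {m : ℕ} [NeZero m] (A B C 𝒳 : Matrix (Fin m) (Fin m) ℂ)
    (h𝒳 : 𝒳 = (A * (Pmat m).transpose) ^ m * 𝒳 * (Pmat m * B) ^ m +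
      ∑ i ∈ range m, (A * (Pmat m).transpose) ^ i * C * (Pmat m * B) ^ i) :
    ((m : ℂ)⁻¹ • ∑ i ∈ range m,
        (A * (Pmat m).transpose) ^ i * (𝒳 + ((m - i - 1 : ℕ) : ℂ) • C) * (Pmat m * B) ^ i) =
      A * (Pmat m).transpose *
        ((m : ℂ)⁻¹ • ∑ i ∈ range m,
          (A * (Pmat m).transpose) ^ i * (𝒳 + ((m - i - 1 : ℕ) : ℂ) • C) * (Pmat m * B) ^ i) *
        Pmat m * B + C := by
  set L := A * (Pmat m).transpose
  set R := Pmat m * B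
  set S := ∑ i ∈ range m, L ^ i * (𝒳 + ((m - i - 1 : ℕ) : ℂ) • C) * R ^ i
  have hS : L * S * R + (m : ℂ) • C = S := by
    have h := map_sum_range_pow_add_nsmul_eq (mulLeft L * mulRight R) 𝒳 C m
      (by simpa only [mulLeft_mul_mulRight_pow_apply] using h𝒳)
    simpa only [S, Nat.cast_smul_eq_nsmul, mulLeft_mul_mulRight_pow_apply,
      mulLeft_mul_mulRight_apply] using h
  have hm : (m : ℂ) ≠ 0 := Nat.cast_ne_zero.mpr (NeZero.ne m)
  calc (m : ℂ)⁻¹ • S = (m : ℂ)⁻¹ • (L * S * R + (m : ℂ) • C) := by rw [hS]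
    _ = L * ((m : ℂ)⁻¹ • S) * Pmat m * B + C := by
      rw [smul_add, smul_smul, inv_mul_cancel₀ hm, one_smul, mul_assoc _ (Pmat m), mul_smul_comm,
        smul_mul_assoc]
end
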